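/- arXiv:2010.08714 — 3 statements merged into one kernel-verified Lean document; each statement's English description precedes it below -/
import Mathlib

section
/- There is an absolute constant C > 0 such that for every u₀ ∈ H^{3,3}(ℝ), the functions W(x,k) = k ∫_x^∞ e^{2ik²(x−y)} q(y) dy and W_k(x,k) = ∫_x^∞ e^{2ik²(x−y)} (1 + 4ik²(x−y)) q(y) dy (the derivative of W in k) satisfy: (i) sup_{x ≥ 0} (∫_{I₀} |W(x,k)|² |dk|)^{1/2} ≤ C ‖u₀‖_{H^{2,2}}; (ii) (∫_0^∞ ∫_{I₀} |W(x,k)|² |dk| dx)^{1/2} ≤ C ‖u₀‖_{H^{3,3}}; (iii) sup_{x ≥ 0} (∫_{I₀} |W_k(x,k)|² |dk|)^{1/2} ≤ C ‖u₀‖_{H^{2,2}}; (iv) (∫_0^∞ ∫_{I₀} |W_k(x,k)|² |dk| dx)^{1/2} ≤ C ‖u₀‖_{H^{2,2}}. Here |dk| denotes arclength measure on I₀. -/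
open MeasureTheory Complex Set

noncomputable section

/-- Membership in the weighted Sobolev space `H^{m,s}(ℝ)`. -/
def MemHms (m s : ℕ) (u : ℝ → ℂ) : Prop :=
  ∀ j ≤ m, MemLp (fun x : ℝ => ((1 + x ^ 2) ^ ((s : ℝ) / 2) : ℝ) • iteratedDeriv j u x) 2 volume

/-- The `H^{m,s}(ℝ)` norm. -/
def HmsNorm (m s : ℕ) (u : ℝ → ℂ) : ℝ :=
  ∑ j ∈ Finset.range (m + 1),
    (eLpNorm (fun x : ℝ => ((1 + x ^ 2) ^ ((s : ℝ) / 2) : ℝ) • iteratedDeriv j u x) 2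
      volume).toReal

/-- `φ(x) = ∫_{−∞}^x |u₀'(s)|² ds`. -/
def phi (u₀ : ℝ → ℂ) (x : ℝ) : ℝ := ∫ s in Iio x, ‖deriv u₀ s‖ ^ 2

/-- `q(x) = conj (u₀'(x)) e^{iφ(x)}`. -/
def qf (u₀ : ℝ → ℂ) (x : ℝ) : ℂ :=
  (starRingEnd ℂ) (deriv u₀ x) * Complex.exp (Complex.I * (phi u₀ x : ℝ))

/-- Arclength measure on `I₀ = {k ∈ ℝ ∪ iℝ : |k| < 1}`. -/
def muI0 : Measure ℂ :=
  (volume.restrict (Ioo (-1 : ℝ) 1)).map (fun s : ℝ => (s : ℂ))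
    + (volume.restrict (Ioo (-1 : ℝ) 1)).map (fun s : ℝ => Complex.I * s)

/-- `W(x,k) = k ∫_x^∞ e^{2ik²(x−y)} q(y) dy`. -/
def Wfun (u₀ : ℝ → ℂ) (x : ℝ) (k : ℂ) : ℂ :=
  k * ∫ y in Ioi x, Complex.exp (2 * Complex.I * k ^ 2 * ((x - y : ℝ) : ℂ)) * qf u₀ y

/-- `W_k(x,k) = ∫_x^∞ e^{2ik²(x−y)} (1 + 4ik²(x−y)) q(y) dy`. -/
def Wkfun (u₀ : ℝ → ℂ) (x : ℝ) (k : ℂ) : ℂ :=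
  ∫ y in Ioi x, Complex.exp (2 * Complex.I * k ^ 2 * ((x - y : ℝ) : ℂ))
    * (1 + 4 * Complex.I * k ^ 2 * ((x - y : ℝ) : ℂ)) * qf u₀ y

/-! For `k ∈ I₀` we have `|k| ≤ 1` and `k² ∈ ℝ`, so the phase `e^{2ik²(x-y)}` is unimodular and,
for `0 ≤ x < y`, both integrands are bounded by `(1 + 4(y - x)) |u₀'(y)| ≤ 8 g(y) / (1 + y)` with
`g(y) = (1 + y²) |u₀'(y)|`. Hence, uniformly in `k ∈ I₀` (a set of length `4`),
`|W|, |W_k| ≤ 8 T g(x)` where `T g(x) = ∫_x^∞ g(y) / (1 + y) dy` is the dual Hardy operator on the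
half-line. The Schur test with weight `(1 + t)^{-1/2}` gives `‖T g‖_{L²(0,∞)} ≤ 2 ‖g‖₂`, and its
Cauchy–Schwarz step alone gives `T g(x)² ≤ 2 ‖g‖₂²` for `x ≥ 0`. Finally `‖g‖₂` is a term of the
`H^{2,2}` norm and is dominated by a term of the `H^{3,3}` norm, so `C = 32` works. -/

open Filter Function Topology
open scoped ENNReal

section Schur

variable {X Y : Type*} [MeasurableSpace X] [MeasurableSpace Y]

theorem ENNReal.sq_lintegral_mul_le_mul_lintegral_div {ν : Measure Y} {K q g : Y → ℝ≥0∞}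
    (hK : AEMeasurable K ν) (hq : AEMeasurable q ν) (hg : AEMeasurable g ν)
    (hq0 : ∀ᵐ y ∂ν, q y ≠ 0) (hq_top : ∀ᵐ y ∂ν, q y ≠ ∞) :
    (∫⁻ y, K y * g y ∂ν) ^ 2 ≤ (∫⁻ y, K y * q y ∂ν) * ∫⁻ y, K y * g y ^ 2 / q y ∂ν := by
  have hsq : ∀ a : ℝ≥0∞, (a ^ (1 / 2 : ℝ)) ^ (2 : ℝ) = a := fun a => by
    rw [← ENNReal.rpow_mul]; norm_num
  have hsplit : (fun y => K y * g y) =ᵐ[ν]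
      fun y => (K y * q y) ^ (1 / 2 : ℝ) * (K y * g y ^ 2 / q y) ^ (1 / 2 : ℝ) := by
    filter_upwards [hq0, hq_top] with y h0 htop
    have hprod : K y * q y * (K y * g y ^ 2 / q y) = (K y * g y) ^ 2 := by
      rw [mul_div_assoc, show K y * q y * (K y * (g y ^ 2 / q y))
        = K y * K y * (q y * (g y ^ 2 / q y)) by ring, ENNReal.mul_div_cancel h0 htop]
      ring
    rw [← ENNReal.mul_rpow_of_nonneg _ _ (by norm_num), hprod, ← ENNReal.rpow_natCast,
      ← ENNReal.rpow_mul]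
    norm_num
  have holder := ENNReal.lintegral_mul_le_Lp_mul_Lq ν Real.HolderConjugate.two_two
    ((hK.mul hq).pow_const (1 / 2 : ℝ)) (((hK.mul (hg.pow_const 2)).div hq).pow_const (1 / 2 : ℝ))
  simp only [hsq, Pi.mul_apply] at holder
  rw [lintegral_congr_ae hsplit]
  calc (∫⁻ y, (K y * q y) ^ (1 / 2 : ℝ) * (K y * g y ^ 2 / q y) ^ (1 / 2 : ℝ) ∂ν) ^ 2
      ≤ ((∫⁻ y, K y * q y ∂ν) ^ (1 / 2 : ℝ) * (∫⁻ y, K y * g y ^ 2 / q y ∂ν) ^ (1 / 2 : ℝ)) ^ 2 :=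
        pow_le_pow_left₀ zero_le (by simpa using holder) 2
    _ = _ := by
      rw [mul_pow, ← ENNReal.rpow_natCast, ← ENNReal.rpow_natCast]
      simp only [Nat.cast_ofNat, hsq]

theorem ENNReal.lintegral_sq_lintegral_le_of_schur {μ : Measure X} {ν : Measure Y}
    [SFinite μ] [SFinite ν] {K : X → Y → ℝ≥0∞} {p : X → ℝ≥0∞} {q g : Y → ℝ≥0∞} {α β : ℝ≥0∞}
    (hK : Measurable (uncurry K)) (hp : Measurable p) (hq : Measurable q) (hg : Measurable g)
    (hq0 : ∀ᵐ y ∂ν, q y ≠ 0) (hq_top : ∀ᵐ y ∂ν, q y ≠ ∞)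
    (hKq : ∀ᵐ x ∂μ, ∫⁻ y, K x y * q y ∂ν ≤ α * p x)
    (hKp : ∀ᵐ y ∂ν, ∫⁻ x, K x y * p x ∂μ ≤ β * q y) :
    ∫⁻ x, (∫⁻ y, K x y * g y ∂ν) ^ 2 ∂μ ≤ α * β * ∫⁻ y, g y ^ 2 ∂ν := by
  have hKx : ∀ x, Measurable (K x) := fun x => hK.comp measurable_prodMk_left
  set r : Y → ℝ≥0∞ := fun y => g y ^ 2 / q y
  have hr : Measurable r := (hg.pow_const 2).div hq
  calc ∫⁻ x, (∫⁻ y, K x y * g y ∂ν) ^ 2 ∂μ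
      ≤ ∫⁻ x, α * (p x * ∫⁻ y, K x y * r y ∂ν) ∂μ := by
        refine lintegral_mono_ae (hKq.mono fun x hx => ?_)
        refine (ENNReal.sq_lintegral_mul_le_mul_lintegral_div (hKx x).aemeasurable
          hq.aemeasurable hg.aemeasurable hq0 hq_top).trans ?_
        simp only [r, mul_div_assoc, ← mul_assoc]
        exact mul_le_mul_left hx _
    _ = α * ∫⁻ y, (∫⁻ x, K x y * p x ∂μ) * r y ∂ν := by
        have hpKr : Measurable fun x => p x * ∫⁻ y, K x y * r y ∂ν :=
          hp.mul (hK.mul (hr.comp measurable_snd)).lintegral_prod_right'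
        rw [lintegral_const_mul _ hpKr]
        congr 1
        calc ∫⁻ x, p x * ∫⁻ y, K x y * r y ∂ν ∂μ
            = ∫⁻ x, ∫⁻ y, p x * (K x y * r y) ∂ν ∂μ :=
              lintegral_congr fun x => (lintegral_const_mul _ ((hKx x).mul hr)).symm
          _ = ∫⁻ y, ∫⁻ x, p x * (K x y * r y) ∂μ ∂ν :=
              lintegral_lintegral_swap ((hp.comp measurable_fst).mul
                (hK.mul (hr.comp measurable_snd))).aemeasurable
          _ = ∫⁻ y, (∫⁻ x, K x y * p x ∂μ) * r y ∂ν := by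
              refine lintegral_congr fun y => ?_
              have hKy : Measurable fun x => K x y * p x :=
                (hK.comp measurable_prodMk_right).mul hp
              rw [← lintegral_mul_const _ hKy]
              exact lintegral_congr fun x => by ring
    _ ≤ α * ∫⁻ y, β * q y * r y ∂ν :=
        mul_le_mul_right (lintegral_mono_ae (hKp.mono fun y hy => mul_le_mul_left hy _)) α
    _ = α * (β * ∫⁻ y, g y ^ 2 ∂ν) := by
        rw [← lintegral_const_mul _ (hg.pow_const 2)]
        refine congrArg _ (lintegral_congr_ae ((hq0.and hq_top).mono fun y hy => ?_))
        simp only [r, mul_assoc, ENNReal.mul_div_cancel hy.1 hy.2]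
    _ = α * β * ∫⁻ y, g y ^ 2 ∂ν := (mul_assoc _ _ _).symm

end Schur

theorem sq_eLpNorm_two {α E : Type*} [MeasurableSpace α] [NormedAddCommGroup E] {μ : Measure α}
    (f : α → E) : eLpNorm f 2 μ ^ 2 = ∫⁻ x, ‖f x‖ₑ ^ 2 ∂μ := by
  simpa using eLpNorm_nnreal_pow_eq_lintegral (f := f) (μ := μ) (p := 2) two_ne_zero

theorem sqrt_integral_le_of_lintegral_enorm_le {α : Type*} [MeasurableSpace α] {μ : Measure α}
    {F : α → ℝ} {c : ℝ} (hc : 0 ≤ c) (h : ∫⁻ a, ‖F a‖ₑ ∂μ ≤ ENNReal.ofReal c ^ 2) :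
    √(∫ a, F a ∂μ) ≤ c := by
  have hnorm : ‖∫ a, F a ∂μ‖ ≤ c ^ 2 := by
    rw [← ENNReal.ofReal_le_ofReal_iff (by positivity), ofReal_norm, ENNReal.ofReal_pow hc]
    exact (enorm_integral_le_lintegral_enorm F).trans h
  exact Real.sqrt_le_iff.2 ⟨hc, (Real.le_norm_self _).trans hnorm⟩

theorem hasDerivAt_one_add_rpow_div {a y : ℝ} (ha : a ≠ -1) (hy : -1 < y) :
    HasDerivAt (fun y : ℝ => (1 + y) ^ (a + 1) / (a + 1)) ((1 + y) ^ a) y := by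
  have ha' : a + 1 ≠ 0 := by contrapose! ha; linarith
  have h := (((hasDerivAt_id y).const_add 1).rpow_const (p := a + 1)
    (Or.inl (by simp; linarith))).div_const (a + 1)
  simpa only [id, one_mul, add_sub_cancel_right, mul_div_cancel_left₀ _ ha'] using h

theorem lintegral_Ioi_one_add_rpow {a x : ℝ} (ha : a < -1) (hx : -1 < x) :
    ∫⁻ y in Ioi x, ENNReal.ofReal ((1 + y) ^ a) =
      ENNReal.ofReal ((1 + x) ^ (a + 1) / -(a + 1)) := by
  have hderiv : ∀ y ∈ Ici x, HasDerivAt (fun y : ℝ => (1 + y) ^ (a + 1) / (a + 1))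
      ((1 + y) ^ a) y := fun y hy => hasDerivAt_one_add_rpow_div ha.ne (hx.trans_le hy)
  have hpos : ∀ y ∈ Ioi x, 0 ≤ (1 + y) ^ a := fun y hy =>
    Real.rpow_nonneg (by linarith [mem_Ioi.1 hy]) a
  have hlim : Tendsto (fun y : ℝ => (1 + y) ^ (a + 1) / (a + 1)) atTop (𝓝 0) := by
    have h := (tendsto_rpow_neg_atTop (y := -(a + 1)) (by linarith)).comp
      (tendsto_atTop_add_const_left _ 1 tendsto_id)
    simpa using h.div_const (a + 1)
  rw [← ofReal_integral_eq_lintegral_ofReal (integrableOn_Ioi_deriv_of_nonneg' hderiv hpos hlim)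
    ((ae_restrict_iff' measurableSet_Ioi).2 (Eventually.of_forall hpos)),
    integral_Ioi_of_hasDerivAt_of_nonneg' hderiv hpos hlim, zero_sub, div_neg]

theorem lintegral_Ioc_one_add_rpow {a s t : ℝ} (ha : a ≠ -1) (hs : -1 < s) (hst : s ≤ t) :
    ∫⁻ y in Ioc s t, ENNReal.ofReal ((1 + y) ^ a) =
      ENNReal.ofReal ((1 + t) ^ (a + 1) / (a + 1) - (1 + s) ^ (a + 1) / (a + 1)) := by
  have hderiv : ∀ y ∈ uIcc s t, HasDerivAt (fun y : ℝ => (1 + y) ^ (a + 1) / (a + 1))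
      ((1 + y) ^ a) y := fun y hy =>
    hasDerivAt_one_add_rpow_div ha (hs.trans_le (by rw [uIcc_of_le hst] at hy; exact hy.1))
  have hpos : ∀ y ∈ Ioc s t, 0 ≤ (1 + y) ^ a := fun y hy =>
    Real.rpow_nonneg (by linarith [hy.1]) a
  have hint : IntervalIntegrable (fun y : ℝ => (1 + y) ^ a) volume s t :=
    ContinuousOn.intervalIntegrable fun y hy =>
      (continuousAt_const.add continuousAt_id |>.rpow_const (Or.inl (show (1 : ℝ) + y ≠ 0 by
        rw [uIcc_of_le hst] at hy; linarith [hy.1]))).continuousWithinAt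
  rw [← ofReal_integral_eq_lintegral_ofReal
      ((intervalIntegrable_iff_integrableOn_Ioc_of_le hst).1 hint)
      ((ae_restrict_iff' measurableSet_Ioc).2 (Eventually.of_forall hpos)),
    ← intervalIntegral.integral_of_le hst,
    intervalIntegral.integral_eq_sub_of_hasDerivAt hderiv hint]

theorem ofReal_one_add_rpow_ne_zero {t : ℝ} (ht : 0 ≤ t) (a : ℝ) :
    ENNReal.ofReal ((1 + t) ^ a) ≠ 0 :=
  (ENNReal.ofReal_pos.2 (Real.rpow_pos_of_pos (by linarith) a)).ne'

def hardyKernel (x y : ℝ) : ℝ≥0∞ := if x < y then ENNReal.ofReal (1 + y)⁻¹ else 0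

theorem measurable_hardyKernel : Measurable (uncurry hardyKernel) :=
  Measurable.ite (measurableSet_lt measurable_fst measurable_snd) (by fun_prop) measurable_const

theorem setLIntegral_Ioi_hardyKernel_mul {x : ℝ} (hx : 0 ≤ x) (f : ℝ → ℝ≥0∞) :
    ∫⁻ y in Ioi 0, hardyKernel x y * f y = ∫⁻ y in Ioi x, ENNReal.ofReal (1 + y)⁻¹ * f y := by
  have h : ∀ y, hardyKernel x y * f y =
      (Ioi x).indicator (fun y => ENNReal.ofReal (1 + y)⁻¹ * f y) y :=
    fun y => by by_cases hxy : x < y <;> simp [hardyKernel, hxy]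
  simp_rw [h, lintegral_indicator measurableSet_Ioi, Measure.restrict_restrict measurableSet_Ioi,
    Ioi_inter_Ioi, max_eq_left hx]

theorem setLIntegral_Ioi_hardyKernel_mul_left (y : ℝ) (f : ℝ → ℝ≥0∞) :
    ∫⁻ x in Ioi 0, hardyKernel x y * f x = ENNReal.ofReal (1 + y)⁻¹ * ∫⁻ x in Ioc 0 y, f x := by
  have h : ∀ x, hardyKernel x y * f x = ENNReal.ofReal (1 + y)⁻¹ * (Iio y).indicator f x :=
    fun x => by by_cases hxy : x < y <;> simp [hardyKernel, hxy]
  simp_rw [h, lintegral_const_mul' _ _ ENNReal.ofReal_ne_top,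
    lintegral_indicator measurableSet_Iio, Measure.restrict_restrict measurableSet_Iio,
    Iio_inter_Ioi]
  rw [setLIntegral_congr Ioo_ae_eq_Ioc]

theorem setLIntegral_hardyKernel_mul_rpow {x : ℝ} (hx : 0 ≤ x) :
    ∫⁻ y in Ioi 0, hardyKernel x y * ENNReal.ofReal ((1 + y) ^ (-(1 / 2) : ℝ)) =
      2 * ENNReal.ofReal ((1 + x) ^ (-(1 / 2) : ℝ)) := by
  have h : ∀ y ∈ Ioi x, ENNReal.ofReal (1 + y)⁻¹ * ENNReal.ofReal ((1 + y) ^ (-(1 / 2) : ℝ)) =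
      ENNReal.ofReal ((1 + y) ^ (-(3 / 2) : ℝ)) := fun y hy => by
    have hy : 0 < 1 + y := by linarith [mem_Ioi.1 hy]
    rw [← ENNReal.ofReal_mul (by positivity), ← Real.rpow_neg_one, ← Real.rpow_add hy]
    norm_num
  rw [setLIntegral_Ioi_hardyKernel_mul hx, setLIntegral_congr_fun measurableSet_Ioi h,
    lintegral_Ioi_one_add_rpow (by norm_num) (by linarith),
    show (-(3 / 2) + 1 : ℝ) = -(1 / 2) by norm_num, ENNReal.ofReal_div_of_pos (by norm_num),
    div_eq_mul_inv, mul_comm, ← ENNReal.ofReal_inv_of_pos (by norm_num)]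
  norm_num

theorem setLIntegral_hardyKernel_mul_rpow_left {y : ℝ} (hy : 0 ≤ y) :
    ∫⁻ x in Ioi 0, hardyKernel x y * ENNReal.ofReal ((1 + x) ^ (-(1 / 2) : ℝ)) ≤
      2 * ENNReal.ofReal ((1 + y) ^ (-(1 / 2) : ℝ)) := by
  have hy1 : 0 < 1 + y := by linarith
  rw [setLIntegral_Ioi_hardyKernel_mul_left,
    lintegral_Ioc_one_add_rpow (by norm_num) (by norm_num) hy,
    ← ENNReal.ofReal_mul (by positivity), ← ENNReal.ofReal_ofNat 2,
    ← ENNReal.ofReal_mul (by norm_num)]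
  refine ENNReal.ofReal_le_ofReal ?_
  have e : (1 + y)⁻¹ * (1 + y) ^ (-(1 / 2) + 1 : ℝ) = (1 + y) ^ (-(1 / 2) : ℝ) := by
    rw [← Real.rpow_neg_one, ← Real.rpow_add hy1]; norm_num
  norm_num at e ⊢
  rw [← e]
  nlinarith [inv_pos.2 hy1]

theorem sq_setLIntegral_hardyKernel_mul_le {g : ℝ → ℝ≥0∞} (hg : Measurable g) {x : ℝ}
    (hx : 0 ≤ x) : (∫⁻ y in Ioi 0, hardyKernel x y * g y) ^ 2 ≤ 2 * ∫⁻ y in Ioi 0, g y ^ 2 := by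
  set w : ℝ → ℝ≥0∞ := fun t => ENNReal.ofReal ((1 + t) ^ (-(1 / 2) : ℝ))
  have hw0 : ∀ᵐ y ∂volume.restrict (Ioi 0), w y ≠ 0 :=
    ae_restrict_of_forall_mem measurableSet_Ioi fun y hy => ofReal_one_add_rpow_ne_zero hy.le _
  have hKw : ∀ y ∈ Ioi (0 : ℝ), hardyKernel x y * g y ^ 2 / w y ≤ g y ^ 2 := fun y hy => by
    have hKw : hardyKernel x y ≤ w y := by
      unfold hardyKernel; split_ifs
      · refine ENNReal.ofReal_le_ofReal ?_
        rw [← Real.rpow_neg_one]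
        exact Real.rpow_le_rpow_of_exponent_le (by linarith [mem_Ioi.1 hy]) (by norm_num)
      · exact zero_le
    calc hardyKernel x y * g y ^ 2 / w y ≤ g y ^ 2 * w y / w y := by
          rw [mul_comm (g y ^ 2)]; gcongr
      _ = g y ^ 2 :=
          ENNReal.mul_div_cancel_right (ofReal_one_add_rpow_ne_zero hy.le _) ENNReal.ofReal_ne_top
  have hwx : w x ≤ 1 := ENNReal.ofReal_le_one.2
    (Real.rpow_le_one_of_one_le_of_nonpos (by linarith) (by norm_num))
  calc (∫⁻ y in Ioi 0, hardyKernel x y * g y) ^ 2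
      ≤ (∫⁻ y in Ioi 0, hardyKernel x y * w y) * ∫⁻ y in Ioi 0, hardyKernel x y * g y ^ 2 / w y :=
        ENNReal.sq_lintegral_mul_le_mul_lintegral_div
          (measurable_hardyKernel.comp measurable_prodMk_left).aemeasurable
          (by fun_prop) hg.aemeasurable hw0 (ae_of_all _ fun _ => ENNReal.ofReal_ne_top)
    _ ≤ 2 * 1 * ∫⁻ y in Ioi 0, g y ^ 2 := by
        rw [setLIntegral_hardyKernel_mul_rpow hx]
        exact mul_le_mul' (by gcongr) (setLIntegral_mono (hg.pow_const 2) hKw)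
    _ = 2 * ∫⁻ y in Ioi 0, g y ^ 2 := by rw [mul_one]

theorem setLIntegral_sq_hardyKernel_mul_le {g : ℝ → ℝ≥0∞} (hg : Measurable g) :
    ∫⁻ x in Ioi 0, (∫⁻ y in Ioi 0, hardyKernel x y * g y) ^ 2 ≤ 4 * ∫⁻ y in Ioi 0, g y ^ 2 := by
  have h := ENNReal.lintegral_sq_lintegral_le_of_schur measurable_hardyKernel
    (by fun_prop) (by fun_prop) hg
    (ae_restrict_of_forall_mem measurableSet_Ioi fun y hy => ofReal_one_add_rpow_ne_zero hy.le _)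
    (ae_of_all _ fun _ => ENNReal.ofReal_ne_top)
    (ae_restrict_of_forall_mem measurableSet_Ioi fun x hx =>
      (setLIntegral_hardyKernel_mul_rpow (le_of_lt hx)).le)
    (ae_restrict_of_forall_mem measurableSet_Ioi fun y hy =>
      setLIntegral_hardyKernel_mul_rpow_left (le_of_lt hy))
  rwa [show (2 : ℝ≥0∞) * 2 = 4 by norm_num] at h

theorem muI0_univ : muI0 univ = 4 := by
  rw [muI0, Measure.add_apply, Measure.map_apply (by fun_prop) MeasurableSet.univ,
    Measure.map_apply (by fun_prop) MeasurableSet.univ]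
  simp only [preimage_univ, Measure.restrict_apply_univ, Real.volume_Ioo]
  rw [← ENNReal.ofReal_add (by norm_num) (by norm_num)]
  norm_num

theorem ae_muI0 : ∀ᵐ k ∂muI0, ‖k‖ ≤ 1 ∧ (k ^ 2).im = 0 := by
  have hP : MeasurableSet {k : ℂ | ‖k‖ ≤ 1 ∧ (k ^ 2).im = 0} :=
    (measurableSet_le (f := fun k : ℂ => ‖k‖) (by fun_prop) measurable_const).inter
      (measurableSet_eq_fun (f := fun k : ℂ => (k ^ 2).im) (by fun_prop) measurable_const)
  rw [muI0, ae_add_measure_iff, ae_map_iff (by fun_prop) hP, ae_map_iff (by fun_prop) hP]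
  constructor <;> refine ae_restrict_of_forall_mem measurableSet_Ioo fun s hs => ⟨?_, ?_⟩ <;>
    simp [abs_le, mul_pow, ← Complex.ofReal_pow, hs.1.le, hs.2.le]

theorem lintegral_muI0_le {f : ℂ → ℝ≥0∞} {c : ℝ≥0∞}
    (hf : ∀ k, ‖k‖ ≤ 1 ∧ (k ^ 2).im = 0 → f k ≤ c) : ∫⁻ k, f k ∂muI0 ≤ 4 * c := by
  calc ∫⁻ k, f k ∂muI0 ≤ ∫⁻ _, c ∂muI0 := lintegral_mono_ae (ae_muI0.mono hf)
    _ = 4 * c := by rw [lintegral_const, muI0_univ, mul_comm]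

theorem norm_exp_two_I_mul {k : ℂ} (hk : (k ^ 2).im = 0) (t : ℝ) :
    ‖Complex.exp (2 * Complex.I * k ^ 2 * t)‖ = 1 := by
  simp [Complex.norm_exp, Complex.mul_re, hk]

theorem norm_one_add_four_I_mul_le {k : ℂ} (hk : ‖k‖ ≤ 1) (t : ℝ) :
    ‖1 + 4 * Complex.I * k ^ 2 * t‖ ≤ 1 + 4 * |t| := by
  calc ‖1 + 4 * Complex.I * k ^ 2 * t‖ ≤ 1 + 4 * ‖k‖ ^ 2 * |t| := by
        refine (norm_add_le _ _).trans_eq ?_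
        simp
    _ ≤ 1 + 4 * |t| := by
        gcongr
        exact mul_le_of_le_one_right (by norm_num) (pow_le_one₀ (norm_nonneg k) hk)

theorem norm_qf (u₀ : ℝ → ℂ) (y : ℝ) : ‖qf u₀ y‖ = ‖deriv u₀ y‖ := by
  simp [qf, Complex.norm_exp]

def hardyMajorant (u₀ : ℝ → ℂ) (x : ℝ) : ℝ≥0∞ :=
  ∫⁻ y in Ioi 0, hardyKernel x y * ‖(1 + y ^ 2) • deriv u₀ y‖ₑ

theorem enorm_setIntegral_Ioi_le_hardyMajorant {u₀ : ℝ → ℂ} {F : ℝ → ℂ} {x : ℝ} (hx : 0 ≤ x)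
    (hF : ∀ y ∈ Ioi x, ‖F y‖ ≤ (1 + 4 * (y - x)) * ‖deriv u₀ y‖) :
    ‖∫ y in Ioi x, F y‖ₑ ≤ 8 * hardyMajorant u₀ x := by
  have hpt : ∀ y ∈ Ioi x,
      ‖F y‖ₑ ≤ 8 * (ENNReal.ofReal (1 + y)⁻¹ * ‖(1 + y ^ 2) • deriv u₀ y‖ₑ) := fun y hy => by
    have hy : x < y := hy
    have hy1 : 0 < 1 + y := by linarith
    have key : (1 + 4 * (y - x)) * (1 + y) ≤ 8 * (1 + y ^ 2) := by nlinarith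
    rw [← ofReal_norm, ← ofReal_norm, ← ENNReal.ofReal_mul (by positivity),
      ← ENNReal.ofReal_ofNat 8, ← ENNReal.ofReal_mul (by norm_num)]
    refine ENNReal.ofReal_le_ofReal ((hF y hy).trans ?_)
    rw [norm_smul, Real.norm_of_nonneg (by positivity),
      show 8 * ((1 + y)⁻¹ * ((1 + y ^ 2) * ‖deriv u₀ y‖)) = 8 * (1 + y ^ 2) / (1 + y) * ‖deriv u₀ y‖
        by field_simp]
    exact mul_le_mul_of_nonneg_right ((le_div_iff₀ hy1).2 key) (norm_nonneg _)
  calc ‖∫ y in Ioi x, F y‖ₑ ≤ ∫⁻ y in Ioi x, ‖F y‖ₑ := enorm_integral_le_lintegral_enorm _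
    _ ≤ ∫⁻ y in Ioi x, 8 * (ENNReal.ofReal (1 + y)⁻¹ * ‖(1 + y ^ 2) • deriv u₀ y‖ₑ) :=
        setLIntegral_mono' measurableSet_Ioi hpt
    _ = 8 * hardyMajorant u₀ x := by
        rw [lintegral_const_mul' _ _ (by simp), hardyMajorant, setLIntegral_Ioi_hardyKernel_mul hx]

theorem enorm_Wfun_le {u₀ : ℝ → ℂ} {x : ℝ} {k : ℂ} (hx : 0 ≤ x) (hk : ‖k‖ ≤ 1 ∧ (k ^ 2).im = 0) :
    ‖Wfun u₀ x k‖ₑ ≤ 8 * hardyMajorant u₀ x := by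
  rw [Wfun, enorm_mul]
  refine (mul_le_of_le_one_left zero_le (by
    rw [← ofReal_norm]; exact ENNReal.ofReal_le_one.2 hk.1)).trans
    (enorm_setIntegral_Ioi_le_hardyMajorant hx fun y hy => ?_)
  rw [norm_mul, norm_exp_two_I_mul hk.2, one_mul, norm_qf]
  exact le_mul_of_one_le_left (norm_nonneg _) (by linarith [mem_Ioi.1 hy])

theorem enorm_Wkfun_le {u₀ : ℝ → ℂ} {x : ℝ} {k : ℂ} (hx : 0 ≤ x) (hk : ‖k‖ ≤ 1 ∧ (k ^ 2).im = 0) :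
    ‖Wkfun u₀ x k‖ₑ ≤ 8 * hardyMajorant u₀ x := by
  refine enorm_setIntegral_Ioi_le_hardyMajorant hx fun y hy => ?_
  rw [norm_mul, norm_mul, norm_exp_two_I_mul hk.2, one_mul, norm_qf]
  refine mul_le_mul_of_nonneg_right ((norm_one_add_four_I_mul_le hk.1 _).trans_eq ?_)
    (norm_nonneg _)
  rw [abs_of_nonpos (by linarith [mem_Ioi.1 hy])]
  ring

theorem measurable_enorm_weighted_deriv (u₀ : ℝ → ℂ) :
    Measurable fun y : ℝ => ‖(1 + y ^ 2) • deriv u₀ y‖ₑ :=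
  ((by fun_prop : Measurable fun y : ℝ => 1 + y ^ 2).smul (measurable_deriv u₀)).enorm

theorem setLIntegral_Ioi_enorm_sq_le (u₀ : ℝ → ℂ) :
    ∫⁻ y in Ioi 0, ‖(1 + y ^ 2) • deriv u₀ y‖ₑ ^ 2 ≤
      eLpNorm (fun y : ℝ => (1 + y ^ 2) • deriv u₀ y) 2 volume ^ 2 :=
  (sq_eLpNorm_two (fun y : ℝ => (1 + y ^ 2) • deriv u₀ y)).symm ▸ setLIntegral_le_lintegral _ _

theorem hardyMajorant_sq_le (u₀ : ℝ → ℂ) {x : ℝ} (hx : 0 ≤ x) :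
    hardyMajorant u₀ x ^ 2 ≤ 2 * eLpNorm (fun y : ℝ => (1 + y ^ 2) • deriv u₀ y) 2 volume ^ 2 :=
  (sq_setLIntegral_hardyKernel_mul_le (measurable_enorm_weighted_deriv u₀) hx).trans
    (mul_le_mul_right (setLIntegral_Ioi_enorm_sq_le u₀) 2)

theorem setLIntegral_hardyMajorant_sq_le (u₀ : ℝ → ℂ) :
    ∫⁻ x in Ioi 0, hardyMajorant u₀ x ^ 2 ≤
      4 * eLpNorm (fun y : ℝ => (1 + y ^ 2) • deriv u₀ y) 2 volume ^ 2 :=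
  (setLIntegral_sq_hardyKernel_mul_le (measurable_enorm_weighted_deriv u₀)).trans
    (mul_le_mul_right (setLIntegral_Ioi_enorm_sq_le u₀) 4)

theorem sqrt_integral_muI0_le_of_enorm_le {u₀ : ℝ → ℂ} {W : ℝ → ℂ → ℂ}
    (hW : ∀ x, 0 ≤ x → ∀ k, ‖k‖ ≤ 1 ∧ (k ^ 2).im = 0 → ‖W x k‖ₑ ≤ 8 * hardyMajorant u₀ x)
    (hE : eLpNorm (fun y : ℝ => (1 + y ^ 2) • deriv u₀ y) 2 volume ≠ ∞) :
    (∀ x, 0 ≤ x → √(∫ k, ‖W x k‖ ^ 2 ∂muI0) ≤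
      32 * (eLpNorm (fun y : ℝ => (1 + y ^ 2) • deriv u₀ y) 2 volume).toReal) ∧
    √(∫ x in Ioi 0, ∫ k, ‖W x k‖ ^ 2 ∂muI0) ≤
      32 * (eLpNorm (fun y : ℝ => (1 + y ^ 2) • deriv u₀ y) 2 volume).toReal := by
  set E := eLpNorm (fun y : ℝ => (1 + y ^ 2) • deriv u₀ y) 2 volume
  have hE32 : ENNReal.ofReal (32 * E.toReal) ^ 2 = 1024 * E ^ 2 := by
    rw [ENNReal.ofReal_mul (by norm_num), ENNReal.ofReal_toReal hE, mul_pow]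
    norm_num
  have hWsq : ∀ x, 0 ≤ x → ∫⁻ k, ‖‖W x k‖ ^ 2‖ₑ ∂muI0 ≤ 256 * hardyMajorant u₀ x ^ 2 :=
    fun x hx => by
      refine (lintegral_muI0_le (c := (8 * hardyMajorant u₀ x) ^ 2) fun k hk => ?_).trans_eq
        (by ring)
      rw [enorm_pow, enorm_norm]
      exact pow_le_pow_left₀ zero_le (hW x hx k hk) 2
  refine ⟨fun x hx => sqrt_integral_le_of_lintegral_enorm_le (by positivity) ?_,
    sqrt_integral_le_of_lintegral_enorm_le (by positivity) ?_⟩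
  · calc ∫⁻ k, ‖‖W x k‖ ^ 2‖ₑ ∂muI0 ≤ 256 * hardyMajorant u₀ x ^ 2 := hWsq x hx
      _ ≤ 256 * (4 * E ^ 2) := by
          gcongr
          exact (hardyMajorant_sq_le u₀ hx).trans (by gcongr; norm_num)
      _ = _ := by rw [hE32]; ring
  · calc ∫⁻ x in Ioi 0, ‖∫ k, ‖W x k‖ ^ 2 ∂muI0‖ₑ
        ≤ ∫⁻ x in Ioi 0, 256 * hardyMajorant u₀ x ^ 2 :=
          setLIntegral_mono' measurableSet_Ioi fun x hx =>
            (enorm_integral_le_lintegral_enorm _).trans (hWsq x (le_of_lt hx))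
      _ = 256 * ∫⁻ x in Ioi 0, hardyMajorant u₀ x ^ 2 := lintegral_const_mul' _ _ (by simp)
      _ ≤ 256 * (4 * E ^ 2) := by gcongr; exact setLIntegral_hardyMajorant_sq_le u₀
      _ = _ := by rw [hE32]; ring

theorem eLpNorm_weight_le_of_le {s s' : ℕ} (h : s ≤ s') (f : ℝ → ℂ) :
    eLpNorm (fun x : ℝ => ((1 + x ^ 2) ^ ((s : ℝ) / 2) : ℝ) • f x) 2 volume ≤
      eLpNorm (fun x : ℝ => ((1 + x ^ 2) ^ ((s' : ℝ) / 2) : ℝ) • f x) 2 volume := by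
  refine eLpNorm_mono fun x => ?_
  have hx : 1 ≤ 1 + x ^ 2 := by nlinarith
  rw [norm_smul, norm_smul, Real.norm_of_nonneg (by positivity),
    Real.norm_of_nonneg (by positivity)]
  gcongr

theorem toReal_eLpNorm_le_HmsNorm {m s j : ℕ} (hj : j ≤ m) (u : ℝ → ℂ) :
    (eLpNorm (fun x : ℝ => ((1 + x ^ 2) ^ ((s : ℝ) / 2) : ℝ) • iteratedDeriv j u x) 2
      volume).toReal ≤ HmsNorm m s u :=
  Finset.single_le_sum (f := fun j => (eLpNorm (fun x : ℝ =>
    ((1 + x ^ 2) ^ ((s : ℝ) / 2) : ℝ) • iteratedDeriv j u x) 2 volume).toReal)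
    (fun _ _ => ENNReal.toReal_nonneg) (Finset.mem_range.2 (by omega))

theorem weight_two_smul_iteratedDeriv_one (u : ℝ → ℂ) :
    (fun x : ℝ => ((1 + x ^ 2) ^ (((2 : ℕ) : ℝ) / 2) : ℝ) • iteratedDeriv 1 u x) =
      fun x => (1 + x ^ 2) • deriv u x := by
  simp

theorem stmt_1 :
    ∃ C > (0 : ℝ), ∀ u₀ : ℝ → ℂ, MemHms 3 3 u₀ →
      -- (i)
      (∀ x : ℝ, 0 ≤ x →
        Real.sqrt (∫ k, ‖Wfun u₀ x k‖ ^ 2 ∂muI0) ≤ C * HmsNorm 2 2 u₀) ∧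
      -- (ii)
      Real.sqrt (∫ x in Ioi (0 : ℝ), ∫ k, ‖Wfun u₀ x k‖ ^ 2 ∂muI0)
        ≤ C * HmsNorm 3 3 u₀ ∧
      -- (iii)
      (∀ x : ℝ, 0 ≤ x →
        Real.sqrt (∫ k, ‖Wkfun u₀ x k‖ ^ 2 ∂muI0) ≤ C * HmsNorm 2 2 u₀) ∧
      -- (iv)
      Real.sqrt (∫ x in Ioi (0 : ℝ), ∫ k, ‖Wkfun u₀ x k‖ ^ 2 ∂muI0)
        ≤ C * HmsNorm 2 2 u₀ := by
  refine ⟨32, by norm_num, fun u₀ hu₀ => ?_⟩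
  set E := eLpNorm (fun y : ℝ => (1 + y ^ 2) • deriv u₀ y) 2 volume
  have hE2 : E = eLpNorm (fun x : ℝ =>
      ((1 + x ^ 2) ^ (((2 : ℕ) : ℝ) / 2) : ℝ) • iteratedDeriv 1 u₀ x) 2 volume := by
    rw [weight_two_smul_iteratedDeriv_one]
  have hE3 : E ≤ eLpNorm (fun x : ℝ =>
      ((1 + x ^ 2) ^ (((3 : ℕ) : ℝ) / 2) : ℝ) • iteratedDeriv 1 u₀ x) 2 volume :=
    hE2 ▸ eLpNorm_weight_le_of_le (by norm_num) _
  have hE3_top := (hu₀ 1 (by norm_num)).2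
  have hE : E ≠ ∞ := (hE3.trans_lt hE3_top).ne
  have h22 : E.toReal ≤ HmsNorm 2 2 u₀ := hE2 ▸ toReal_eLpNorm_le_HmsNorm (by norm_num) u₀
  have h33 : E.toReal ≤ HmsNorm 3 3 u₀ :=
    (ENNReal.toReal_mono hE3_top.ne hE3).trans (toReal_eLpNorm_le_HmsNorm (by norm_num) u₀)
  obtain ⟨hWx, hW⟩ :=
    sqrt_integral_muI0_le_of_enorm_le (fun x hx k hk => enorm_Wfun_le (u₀ := u₀) hx hk) hE
  obtain ⟨hWkx, hWk⟩ :=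
    sqrt_integral_muI0_le_of_enorm_le (fun x hx k hk => enorm_Wkfun_le (u₀ := u₀) hx hk) hE
  exact ⟨fun x hx => (hWx x hx).trans (by gcongr), hW.trans (by gcongr),
    fun x hx => (hWkx x hx).trans (by gcongr), hWk.trans (by gcongr)⟩

end
end

section
/- Let X be a Banach space and let C⁰(ℝ⁺, X) denote the space of bounded continuous functions from ℝ⁺ = [0,∞) to X with the supremum norm. Let T be a linear integral operator on C⁰(ℝ⁺, X) and suppose there is a nonnegative function h ∈ L¹(ℝ⁺) such that for every f ∈ C⁰(ℝ⁺, X) one has (Tf)*(x) ≤ ∫_x^∞ h(t) f*(t) dt for all x ≥ 0, where f*(x) = sup_{y ≥ x} ‖f(y)‖_X. Then for every f ∈ C⁰(ℝ⁺, X) the equation u = f + Tu has a unique solution u ∈ C⁰(ℝ⁺, X); that is, I − T is invertible on C⁰(ℝ⁺, X), and its inverse satisfies ‖(I − T)^{−1}‖ ≤ exp(∫_0^∞ h(t) dt). -/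
open MeasureTheory Set

noncomputable section

/-- `f*(x) = sup_{y ≥ x} ‖f(y)‖` for a bounded continuous function on `ℝ⁺ = [0,∞)`. -/
def fstar {X : Type*} [NormedAddCommGroup X]
    (f : BoundedContinuousFunction (Ici (0 : ℝ)) X) (x : ℝ) : ℝ :=
  ⨆ y : Ici (0 : ℝ), if x ≤ (y : ℝ) then ‖f y‖ else 0

/-! With `H x = ∫_x^∞ h`, which is absolutely continuous with `H' = -h` a.e., one has
`∫_x^∞ h Hⁿ = H(x)ⁿ⁺¹/(n+1)`. Feeding this into the hypothesis on `T` inductively gives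
`(Tⁿ f)*(x) ≤ H(x)ⁿ/n! ‖f‖`, and since `f*(0) = ‖f‖` this is the operator bound
`‖Tⁿ‖ ≤ H(0)ⁿ/n!`. Hence the Neumann series `∑ Tⁿ` converges to an inverse of `I - T` whose
norm is at most `exp H(0)`. -/

open Filter Topology
open scoped Nat BoundedContinuousFunction

theorem AbsolutelyContinuousOnInterval.fun_pow {f : ℝ → ℝ} {a b : ℝ}
    (hf : AbsolutelyContinuousOnInterval f a b) :
    ∀ n : ℕ, AbsolutelyContinuousOnInterval (fun x => f x ^ n) a b
  | 0 => by
    simpa using (LipschitzWith.const (1 : ℝ)).lipschitzOnWith.absolutelyContinuousOnInterval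
  | n + 1 => by simpa only [pow_succ] using (hf.fun_pow n).fun_mul hf

section TailIntegral

variable {h : ℝ → ℝ}

def tailIntegral (h : ℝ → ℝ) (x : ℝ) : ℝ := ∫ t in Ioi x, h t

theorem tailIntegral_eq_sub (hh : Integrable h) (a x : ℝ) :
    tailIntegral h x = tailIntegral h a - ∫ t in a..x, h t := by
  rw [tailIntegral, tailIntegral,
    ← intervalIntegral.integral_Ioi_sub_Ioi' hh.integrableOn hh.integrableOn, sub_sub_cancel]

theorem continuous_tailIntegral (hh : Integrable h) : Continuous (tailIntegral h) :=
  (continuous_const.sub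
      (intervalIntegral.continuous_primitive (fun _ _ => hh.intervalIntegrable) 0)).congr
    fun x => (tailIntegral_eq_sub hh 0 x).symm

theorem tendsto_tailIntegral_atTop (hh : Integrable h) :
    Tendsto (tailIntegral h) atTop (𝓝 0) := by
  have h_lim := (intervalIntegral_tendsto_integral_Ioi 0 hh.integrableOn tendsto_id).const_sub
    (tailIntegral h 0)
  rw [tailIntegral, sub_self] at h_lim
  exact h_lim.congr fun x => (tailIntegral_eq_sub hh 0 x).symm

theorem abs_tailIntegral_le (hh : Integrable h) (x : ℝ) :
    |tailIntegral h x| ≤ ∫ t, |h t| :=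
  abs_integral_le_integral_abs.trans
    (setIntegral_le_integral hh.abs (ae_of_all _ fun _ => abs_nonneg _))

theorem tailIntegral_nonneg (h_nonneg : ∀ t, 0 ≤ h t) (x : ℝ) : 0 ≤ tailIntegral h x :=
  setIntegral_nonneg measurableSet_Ioi fun t _ => h_nonneg t

theorem absolutelyContinuousOnInterval_tailIntegral (hh : Integrable h) (a b : ℝ) :
    AbsolutelyContinuousOnInterval (tailIntegral h) a b := by
  have h_prim := (hh.intervalIntegrable (a := a) (b := b))
    |>.absolutelyContinuousOnInterval_intervalIntegral left_mem_uIcc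
  have h_const := (LipschitzWith.const (tailIntegral h a)).lipschitzOnWith (s := uIcc a b)
    |>.absolutelyContinuousOnInterval
  rw [funext (tailIntegral_eq_sub hh a)]
  exact h_const.sub h_prim

theorem ae_hasDerivAt_tailIntegral (hh : Integrable h) :
    ∀ᵐ x, HasDerivAt (tailIntegral h) (-h x) x := by
  filter_upwards [LocallyIntegrable.ae_hasDerivAt_integral hh.locallyIntegrable] with x hx
  rw [funext (tailIntegral_eq_sub hh 0)]
  exact (hx 0).const_sub (tailIntegral h 0)

theorem intervalIntegral_mul_tailIntegral_pow (hh : Integrable h) (n : ℕ) (a b : ℝ) :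
    ∫ t in a..b, h t * tailIntegral h t ^ n
      = (tailIntegral h a ^ (n + 1) - tailIntegral h b ^ (n + 1)) / (n + 1) := by
  have h_ftc := (absolutelyContinuousOnInterval_tailIntegral hh a b).fun_pow (n + 1)
    |>.integral_deriv_eq_sub
  have h_deriv : ∫ t in a..b, deriv (fun x => tailIntegral h x ^ (n + 1)) t
      = ∫ t in a..b, -((n + 1) * (h t * tailIntegral h t ^ n)) := by
    refine intervalIntegral.integral_congr_ae ?_
    filter_upwards [ae_hasDerivAt_tailIntegral hh] with t ht _
    rw [(ht.fun_pow (n + 1)).deriv]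
    push_cast
    ring
  rw [h_deriv, intervalIntegral.integral_neg, intervalIntegral.integral_const_mul] at h_ftc
  field_simp
  linarith

theorem integrable_mul_tailIntegral_pow (hh : Integrable h) (n : ℕ) :
    Integrable fun t => h t * tailIntegral h t ^ n :=
  hh.mul_bdd ((continuous_tailIntegral hh).pow n).aestronglyMeasurable
    (ae_of_all _ fun t => by
      rw [norm_pow, Real.norm_eq_abs]
      exact pow_le_pow_left₀ (abs_nonneg _) (abs_tailIntegral_le hh t) n)

theorem integral_Ioi_mul_tailIntegral_pow (hh : Integrable h) (n : ℕ) (x : ℝ) :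
    ∫ t in Ioi x, h t * tailIntegral h t ^ n = tailIntegral h x ^ (n + 1) / (n + 1) := by
  have h_lim : Tendsto
      (fun b => (tailIntegral h x ^ (n + 1) - tailIntegral h b ^ (n + 1)) / (n + 1)) atTop
      (𝓝 (tailIntegral h x ^ (n + 1) / (n + 1))) := by
    simpa using (((tendsto_tailIntegral_atTop hh).pow (n + 1)).const_sub
      (tailIntegral h x ^ (n + 1))).div_const ((n : ℝ) + 1)
  refine tendsto_nhds_unique ?_ h_lim
  have h_conv := intervalIntegral_tendsto_integral_Ioi x
    (integrable_mul_tailIntegral_pow hh n).integrableOn tendsto_id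
  simpa only [id, intervalIntegral_mul_tailIntegral_pow hh] using h_conv

end TailIntegral

section Fstar

variable {X : Type*} [NormedAddCommGroup X] (f : Ici (0 : ℝ) →ᵇ X)

theorem norm_apply_le_fstar {x : ℝ} (y : Ici (0 : ℝ)) (hxy : x ≤ y) :
    ‖f y‖ ≤ fstar f x := by
  refine le_ciSup_of_le ⟨‖f‖, ?_⟩ y (by rw [if_pos hxy])
  rintro _ ⟨z, rfl⟩
  dsimp only
  split_ifs
  exacts [f.norm_coe_le_norm z, norm_nonneg f]

theorem fstar_nonneg (x : ℝ) : 0 ≤ fstar f x :=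
  Real.iSup_nonneg fun y => by split_ifs <;> simp

theorem fstar_le_norm (x : ℝ) : fstar f x ≤ ‖f‖ :=
  Real.iSup_le (fun y => by split_ifs; exacts [f.norm_coe_le_norm y, norm_nonneg f])
    (norm_nonneg f)

theorem fstar_of_nonpos {x : ℝ} (hx : x ≤ 0) : fstar f x = ‖f‖ :=
  (fstar_le_norm f x).antisymm <| (f.norm_le (fstar_nonneg f x)).2 fun y =>
    norm_apply_le_fstar f y (hx.trans y.2)

theorem fstar_antitone : Antitone (fstar f) := fun x x' hxx' =>
  Real.iSup_le (fun y => by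
    split_ifs with hy
    exacts [norm_apply_le_fstar f y (hxx'.trans hy), fstar_nonneg f x]) (fstar_nonneg f x)

theorem integrable_mul_fstar {h : ℝ → ℝ} (hh : Integrable h) :
    Integrable fun t => h t * fstar f t :=
  hh.mul_bdd (fstar_antitone f).measurable.aestronglyMeasurable (ae_of_all _ fun t => by
    rw [Real.norm_of_nonneg (fstar_nonneg f t)]
    exact fstar_le_norm f t)

end Fstar

theorem fstar_iterate_le {X : Type*} [NormedAddCommGroup X]
    {T : (Ici (0 : ℝ) →ᵇ X) → (Ici (0 : ℝ) →ᵇ X)} {h : ℝ → ℝ}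
    (hh : Integrable h) (h_nonneg : ∀ t, 0 ≤ h t)
    (hT : ∀ f x, 0 ≤ x → fstar (T f) x ≤ ∫ t in Ioi x, h t * fstar f t)
    (f : Ici (0 : ℝ) →ᵇ X) (n : ℕ) {x : ℝ} (hx : 0 ≤ x) :
    fstar (T^[n] f) x ≤ tailIntegral h x ^ n / n ! * ‖f‖ := by
  induction n generalizing x with
  | zero => simpa using fstar_le_norm f x
  | succ n ih =>
    have h_int : Integrable fun t => h t * (tailIntegral h t ^ n / n ! * ‖f‖) := by
      refine ((integrable_mul_tailIntegral_pow hh n).mul_const (‖f‖ / n !)).congr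
        (ae_of_all _ fun t => ?_)
      ring
    rw [Function.iterate_succ_apply']
    calc fstar (T (T^[n] f)) x
        ≤ ∫ t in Ioi x, h t * fstar (T^[n] f) t := hT _ x hx
      _ ≤ ∫ t in Ioi x, h t * (tailIntegral h t ^ n / n ! * ‖f‖) :=
          setIntegral_mono_on (integrable_mul_fstar _ hh).integrableOn h_int.integrableOn
            measurableSet_Ioi fun t ht =>
              mul_le_mul_of_nonneg_left (ih (hx.trans (le_of_lt ht))) (h_nonneg t)
      _ = (∫ t in Ioi x, h t * tailIntegral h t ^ n) * (‖f‖ / n !) := by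
          rw [← integral_mul_const]
          congr 1 with t
          ring
      _ = tailIntegral h x ^ (n + 1) / (n + 1)! * ‖f‖ := by
          rw [integral_Ioi_mul_tailIntegral_pow hh, Nat.factorial_succ]
          push_cast
          field_simp

section NeumannSeries

variable {R : Type*} [NormedRing R] {x : R} {c : ℝ}

theorem summable_pow_of_norm_pow_le [CompleteSpace R] (hx : ∀ n, ‖x ^ n‖ ≤ c ^ n / n !) :
    Summable (x ^ ·) :=
  Summable.of_norm_bounded (Real.summable_pow_div_factorial c) hx

theorem norm_tsum_pow_le_exp (hx : ∀ n, ‖x ^ n‖ ≤ c ^ n / n !) :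
    ‖∑' n, x ^ n‖ ≤ Real.exp c :=
  tsum_of_norm_bounded (Real.exp_eq_exp_ℝ ▸ NormedSpace.expSeries_div_hasSum_exp c) hx

end NeumannSeries

theorem LinearMap.existsUnique_eq_add_of_norm_iterate_le {E : Type*} [NormedAddCommGroup E]
    [NormedSpace ℝ E] [CompleteSpace E] (T : E →ₗ[ℝ] E) {c : ℝ} (hc : 0 ≤ c)
    (hT : ∀ n f, ‖T^[n] f‖ ≤ c ^ n / n ! * ‖f‖) :
    (∀ f, ∃! u, u = f + T u) ∧ ∀ f u, u = f + T u → ‖u‖ ≤ Real.exp c * ‖f‖ := by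
  let L := T.mkContinuous c (by simpa using hT 1)
  have hL : ∀ n, ‖L ^ n‖ ≤ c ^ n / n ! := fun n =>
    (L ^ n).opNorm_le_bound (by positivity) fun f => by
      change ‖((L ^ n : E →L[ℝ] E) : E →ₗ[ℝ] E) f‖ ≤ _
      rw [ContinuousLinearMap.toLinearMap_pow, Module.End.pow_apply]
      exact hT n f
  let S := ∑' n, L ^ n
  have hS := summable_pow_of_norm_pow_le hL
  have h_fixed : ∀ f u, u = f + T u ↔ u = S f := by
    intro f u
    rw [← sub_eq_iff_eq_add]
    constructor
    · rintro rfl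
      simpa [S, L] using congr($(hS.tsum_pow_mul_one_sub) u).symm
    · rintro rfl
      simpa [S, L] using congr($(hS.one_sub_mul_tsum_pow) f)
  refine ⟨fun f => ⟨S f, (h_fixed f _).2 rfl, fun u hu => (h_fixed f u).1 hu⟩,
    fun f u hu => ?_⟩
  rw [(h_fixed f u).1 hu]
  exact (S.le_opNorm f).trans (mul_le_mul_of_nonneg_right (norm_tsum_pow_le_exp hL) (norm_nonneg f))

theorem existsUnique_eq_add_of_fstar_le {X : Type*} [NormedAddCommGroup X] [NormedSpace ℝ X]
    [CompleteSpace X] {T : (Ici (0 : ℝ) →ᵇ X) →ₗ[ℝ] (Ici (0 : ℝ) →ᵇ X)} {h : ℝ → ℝ}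
    (hh : Integrable h) (h_nonneg : ∀ t, 0 ≤ h t)
    (hT : ∀ f x, 0 ≤ x → fstar (T f) x ≤ ∫ t in Ioi x, h t * fstar f t) :
    (∀ f, ∃! u, u = f + T u) ∧
      ∀ f u, u = f + T u → ‖u‖ ≤ Real.exp (tailIntegral h 0) * ‖f‖ :=
  T.existsUnique_eq_add_of_norm_iterate_le (tailIntegral_nonneg h_nonneg 0) fun n f => by
    rw [← fstar_of_nonpos _ le_rfl]
    exact fstar_iterate_le hh h_nonneg hT f n le_rfl

theorem stmt_3 {X : Type*} [NormedAddCommGroup X] [NormedSpace ℝ X] [CompleteSpace X]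
    (T : BoundedContinuousFunction (Ici (0 : ℝ)) X →ₗ[ℝ]
         BoundedContinuousFunction (Ici (0 : ℝ)) X)
    (h : ℝ → ℝ) (hpos : ∀ t, 0 ≤ t → 0 ≤ h t)
    (hint : IntegrableOn h (Ioi (0 : ℝ)) volume)
    (hT : ∀ f : BoundedContinuousFunction (Ici (0 : ℝ)) X, ∀ x : ℝ, 0 ≤ x →
      fstar (T f) x ≤ ∫ t in Ioi x, h t * fstar f t) :
    (∀ f : BoundedContinuousFunction (Ici (0 : ℝ)) X,
      ∃! u : BoundedContinuousFunction (Ici (0 : ℝ)) X, u = f + T u) ∧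
    (∀ f u : BoundedContinuousFunction (Ici (0 : ℝ)) X, u = f + T u →
      ‖u‖ ≤ Real.exp (∫ t in Ioi (0 : ℝ), h t) * ‖f‖) := by
  set h₀ := (Ioi (0 : ℝ)).indicator h
  have h₀_nonneg : ∀ t, 0 ≤ h₀ t := indicator_nonneg fun t ht => hpos t (le_of_lt ht)
  have h₀_int : Integrable h₀ := (integrable_indicator_iff measurableSet_Ioi).2 hint
  have h₀_eq : ∀ x, 0 ≤ x → ∀ g : ℝ → ℝ,
      ∫ t in Ioi x, h₀ t * g t = ∫ t in Ioi x, h t * g t :=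
    fun x hx g => setIntegral_congr_fun measurableSet_Ioi fun t ht => by
      rw [show h₀ t = h t from indicator_of_mem (hx.trans_lt ht) h]
  have hT₀ : ∀ f x, 0 ≤ x → fstar (T f) x ≤ ∫ t in Ioi x, h₀ t * fstar f t :=
    fun f x hx => h₀_eq x hx _ ▸ hT f x hx
  have h_total : ∫ t in Ioi 0, h t = tailIntegral h₀ 0 := by
    simpa [tailIntegral] using (h₀_eq 0 le_rfl 1).symm
  rw [h_total]
  exact existsUnique_eq_add_of_fstar_le h₀_int h₀_nonneg hT₀

end
end

section
/- Let I be a measurable subset of a measure space, h : ℝ⁺ → [0,∞) measurable, and K : ℝ⁺ × ℝ⁺ × I → ℂ a measurable kernel such that K(x,y,k) = 0 whenever x > y and sup_{k ∈ I} |K(x,y,k)| ≤ h(y) for all x ≤ y. Define (T f)(x,k) = ∫_x^∞ K(x,y,k) f(y,k) dy. Then for every f ∈ L²(ℝ⁺ × I): (i) ‖T f‖_{L²(ℝ⁺ × I)} ≤ (∫_0^∞ y h(y)² dy)^{1/2} ‖f‖_{L²(ℝ⁺ × I)}; (ii) sup_{x ≥ 0} ‖(T f)(x, ·)‖_{L²(I)}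 ≤ (∫_0^∞ h(y)² dy)^{1/2} ‖f‖_{L²(ℝ⁺ × I)} (whenever the right-hand sides are finite). -/
open MeasureTheory Complex Set
open scoped ENNReal

/-!
Cauchy–Schwarz in `y` gives, for `x ≥ 0`,
`|T f (x, k)|² ≤ (∫_x^∞ h²) · ∫_0^∞ |f (y, k)|² dy`.
Integrating in `k` and using `∫_x^∞ h² ≤ ∫_0^∞ h²` gives (ii). Integrating in `(x, k)` instead,
the kernel factor becomes `∫_0^∞ ∫_x^∞ h(y)² dy dx`, which by Tonelli on the triangle
`0 < x < y` equals `∫_0^∞ y h(y)² dy`; this gives (i).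
-/

theorem sq_norm_integral_mul_le {α 𝕜 : Type*} [MeasurableSpace α] [RCLike 𝕜] {ν : Measure α}
    {k g : α → 𝕜} {h : α → ℝ} (hh : MemLp h 2 ν) (hg : MemLp g 2 ν)
    (hk : ∀ᵐ y ∂ν, ‖k y‖ ≤ h y) :
    ‖∫ y, k y * g y ∂ν‖ ^ 2 ≤ (∫ y, h y ^ 2 ∂ν) * ∫ y, ‖g y‖ ^ 2 ∂ν := by
  have h2 : ENNReal.ofReal 2 = 2 := by norm_num
  have holder := integral_mul_norm_le_Lp_mul_Lq Real.HolderConjugate.two_two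
    (h2 ▸ hh) (h2 ▸ hg.norm)
  simp only [Real.rpow_two, Real.norm_eq_abs, abs_norm, sq_abs, ← Real.sqrt_eq_rpow] at holder
  have hdom : Integrable (fun y => |h y| * ‖g y‖) ν := hh.abs.integrable_mul hg.norm
  have hle : ‖∫ y, k y * g y ∂ν‖ ≤ ∫ y, |h y| * ‖g y‖ ∂ν := by
    refine (norm_integral_le_integral_norm _).trans <|
      integral_mono_of_nonneg (.of_forall fun _ => norm_nonneg _) hdom ?_
    filter_upwards [hk] with y hy
    rw [norm_mul]
    exact mul_le_mul_of_nonneg_right (hy.trans (le_abs_self _)) (norm_nonneg _)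
  calc ‖∫ y, k y * g y ∂ν‖ ^ 2
      ≤ (√(∫ y, h y ^ 2 ∂ν) * √(∫ y, ‖g y‖ ^ 2 ∂ν)) ^ 2 := by
        gcongr; exact hle.trans holder
    _ = (∫ y, h y ^ 2 ∂ν) * ∫ y, ‖g y‖ ^ 2 ∂ν := by
        rw [mul_pow, Real.sq_sqrt (integral_nonneg fun _ => sq_nonneg _),
          Real.sq_sqrt (integral_nonneg fun _ => sq_nonneg _)]

theorem lintegral_Ioi_lintegral_Ioi {G : ℝ → ℝ≥0∞} (hG : Measurable G) (a : ℝ) :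
    ∫⁻ x in Ioi a, ∫⁻ y in Ioi x, G y = ∫⁻ y in Ioi a, ENNReal.ofReal (y - a) * G y := by
  have hmeas : Measurable (Function.uncurry fun x y => (Ioi x).indicator G y) :=
    (hG.comp measurable_snd).indicator (measurableSet_lt measurable_fst measurable_snd)
  calc ∫⁻ x in Ioi a, ∫⁻ y in Ioi x, G y
      = ∫⁻ x in Ioi a, ∫⁻ y in Ioi a, (Ioi x).indicator G y := by
        refine setLIntegral_congr_fun measurableSet_Ioi fun x hx => ?_
        rw [lintegral_indicator measurableSet_Ioi, Measure.restrict_restrict measurableSet_Ioi,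
          inter_eq_left.2 (Ioi_subset_Ioi (le_of_lt hx))]
    _ = ∫⁻ y in Ioi a, ∫⁻ x in Ioi a, (Iio y).indicator (fun _ => G y) x := by
        rw [lintegral_lintegral_swap hmeas.aemeasurable]
        simp only [indicator_apply, mem_Ioi, mem_Iio]
    _ = ∫⁻ y in Ioi a, ENNReal.ofReal (y - a) * G y := by
        refine lintegral_congr fun y => ?_
        rw [lintegral_indicator measurableSet_Iio, Measure.restrict_restrict measurableSet_Iio,
          setLIntegral_const, Iio_inter_Ioi, Real.volume_Ioo, mul_comm]

section TailIntegral

variable {g : ℝ → ℝ} {a : ℝ}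

theorem aestronglyMeasurable_integral_Ioi (hg0 : ∀ y, 0 ≤ g y) (hga : IntegrableOn g (Ioi a)) :
    AEStronglyMeasurable (fun x => ∫ y in Ioi x, g y) (volume.restrict (Ioi a)) := by
  have hanti : AntitoneOn (fun x => ∫ y in Ioi x, g y) (Ioi a) := fun x hx _ _ hxx' =>
    setIntegral_mono_set (hga.mono_set (Ioi_subset_Ioi (le_of_lt hx))) (.of_forall hg0)
      (Ioi_subset_Ioi hxx').eventuallyLE
  exact (aemeasurable_restrict_of_antitoneOn measurableSet_Ioi hanti).aestronglyMeasurable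

theorem lintegral_ofReal_integral_Ioi (hg : Measurable g) (hg0 : ∀ y, 0 ≤ g y)
    (hga : IntegrableOn g (Ioi a)) :
    ∫⁻ x in Ioi a, ENNReal.ofReal (∫ y in Ioi x, g y)
      = ∫⁻ y in Ioi a, ENNReal.ofReal ((y - a) * g y) := by
  simp_rw [ENNReal.ofReal_mul' (hg0 _)]
  rw [← lintegral_Ioi_lintegral_Ioi hg.ennreal_ofReal]
  refine setLIntegral_congr_fun measurableSet_Ioi fun x hx => ?_
  exact ofReal_integral_eq_lintegral_ofReal (hga.mono_set (Ioi_subset_Ioi (le_of_lt hx)))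
    (.of_forall hg0)

theorem integrableOn_integral_Ioi (hg : Measurable g) (hg0 : ∀ y, 0 ≤ g y)
    (hga : IntegrableOn g (Ioi a)) (hyg : IntegrableOn (fun y => (y - a) * g y) (Ioi a)) :
    IntegrableOn (fun x => ∫ y in Ioi x, g y) (Ioi a) := by
  refine ⟨aestronglyMeasurable_integral_Ioi hg0 hga, ?_⟩
  rw [hasFiniteIntegral_iff_ofReal (.of_forall fun x => integral_nonneg fun y => hg0 y),
    lintegral_ofReal_integral_Ioi hg hg0 hga]
  exact hyg.lintegral_lt_top

theorem integral_Ioi_integral_Ioi (hg : Measurable g) (hg0 : ∀ y, 0 ≤ g y)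
    (hga : IntegrableOn g (Ioi a)) :
    ∫ x in Ioi a, ∫ y in Ioi x, g y = ∫ y in Ioi a, (y - a) * g y := by
  rw [integral_eq_lintegral_of_nonneg_ae (.of_forall fun x => integral_nonneg fun y => hg0 y)
      (aestronglyMeasurable_integral_Ioi hg0 hga), lintegral_ofReal_integral_Ioi hg hg0 hga,
    integral_eq_lintegral_of_nonneg_ae _ (by fun_prop)]
  filter_upwards [ae_restrict_mem measurableSet_Ioi] with y hy
  exact mul_nonneg (sub_nonneg.2 (le_of_lt hy)) (hg0 y)

end TailIntegral

section TriangularKernel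

variable {I : Type*} [MeasurableSpace I] {μ : Measure I} {h : ℝ → ℝ} {K : ℝ → ℝ → I → ℂ}
  {f : ℝ → I → ℂ}

theorem sq_norm_integral_Ioi_kernel_le (hmeas : Measurable h)
    (hKbd : ∀ x y : ℝ, x ≤ y → ∀ k : I, ‖K x y k‖ ≤ h y)
    (hh2 : IntegrableOn (fun y : ℝ => h y ^ 2) (Ioi 0))
    (hfmeas : Measurable (fun p : ℝ × I => f p.1 p.2)) {x : ℝ} (hx : 0 ≤ x) {k : I}
    (hfk : IntegrableOn (fun y => ‖f y k‖ ^ 2) (Ioi 0)) :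
    ‖∫ y in Ioi x, K x y k * f y k‖ ^ 2
      ≤ (∫ y in Ioi x, h y ^ 2) * ∫ y in Ioi 0, ‖f y k‖ ^ 2 := by
  have hsub : Ioi x ⊆ Ioi 0 := Ioi_subset_Ioi hx
  have hfk_meas : Measurable fun y => f y k := hfmeas.comp (measurable_id.prodMk measurable_const)
  have hL2h : MemLp h 2 (volume.restrict (Ioi x)) :=
    (memLp_two_iff_integrable_sq hmeas.aestronglyMeasurable).2 (hh2.mono_set hsub)
  have hL2f : MemLp (fun y => f y k) 2 (volume.restrict (Ioi x)) :=
    (memLp_two_iff_integrable_sq_norm hfk_meas.aestronglyMeasurable).2 (hfk.mono_set hsub)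
  have hKx : ∀ᵐ y ∂volume.restrict (Ioi x), ‖K x y k‖ ≤ h y := by
    filter_upwards [ae_restrict_mem measurableSet_Ioi] with y hy
    exact hKbd x y (le_of_lt hy) k
  refine (sq_norm_integral_mul_le hL2h hL2f hKx).trans ?_
  exact mul_le_mul_of_nonneg_left
    (setIntegral_mono_set hfk (.of_forall fun _ => sq_nonneg _) hsub.eventuallyLE)
    (integral_nonneg fun _ => sq_nonneg _)

variable [SigmaFinite μ]

theorem integral_sq_norm_integral_Ioi_kernel_le (hmeas : Measurable h)
    (hKbd : ∀ x y : ℝ, x ≤ y → ∀ k : I, ‖K x y k‖ ≤ h y)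
    (hh2 : IntegrableOn (fun y : ℝ => h y ^ 2) (Ioi 0))
    (hfmeas : Measurable (fun p : ℝ × I => f p.1 p.2))
    (hf : Integrable (fun p : ℝ × I => ‖f p.1 p.2‖ ^ 2) ((volume.restrict (Ioi 0)).prod μ))
    {x : ℝ} (hx : 0 ≤ x) :
    ∫ k, ‖∫ y in Ioi x, K x y k * f y k‖ ^ 2 ∂μ
      ≤ (∫ y in Ioi 0, h y ^ 2)
        * ∫ p : ℝ × I, ‖f p.1 p.2‖ ^ 2 ∂((volume.restrict (Ioi 0)).prod μ) := by
  have htail : ∫ y in Ioi x, h y ^ 2 ≤ ∫ y in Ioi 0, h y ^ 2 :=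
    setIntegral_mono_set hh2 (.of_forall fun _ => sq_nonneg _) (Ioi_subset_Ioi hx).eventuallyLE
  calc ∫ k, ‖∫ y in Ioi x, K x y k * f y k‖ ^ 2 ∂μ
      ≤ ∫ k, (∫ y in Ioi 0, h y ^ 2) * (∫ y in Ioi 0, ‖f y k‖ ^ 2) ∂μ := by
        refine integral_mono_of_nonneg (.of_forall fun _ => sq_nonneg _)
          (hf.integral_prod_right.const_mul _) ?_
        filter_upwards [hf.swap.prod_right_ae] with k hk
        refine (sq_norm_integral_Ioi_kernel_le hmeas hKbd hh2 hfmeas hx hk).trans ?_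
        gcongr
    _ = _ := by rw [integral_const_mul, integral_prod_symm _ hf]

theorem integral_prod_sq_norm_integral_Ioi_kernel_le (hmeas : Measurable h)
    (hKbd : ∀ x y : ℝ, x ≤ y → ∀ k : I, ‖K x y k‖ ≤ h y)
    (hh2 : IntegrableOn (fun y : ℝ => h y ^ 2) (Ioi 0))
    (hyh2 : IntegrableOn (fun y : ℝ => y * h y ^ 2) (Ioi 0))
    (hfmeas : Measurable (fun p : ℝ × I => f p.1 p.2))
    (hf : Integrable (fun p : ℝ × I => ‖f p.1 p.2‖ ^ 2) ((volume.restrict (Ioi 0)).prod μ)) :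
    ∫ p : ℝ × I, ‖∫ y in Ioi p.1, K p.1 y p.2 * f y p.2‖ ^ 2 ∂((volume.restrict (Ioi 0)).prod μ)
      ≤ (∫ y in Ioi 0, y * h y ^ 2)
        * ∫ p : ℝ × I, ‖f p.1 p.2‖ ^ 2 ∂((volume.restrict (Ioi 0)).prod μ) := by
  have hh2_meas : Measurable fun y => h y ^ 2 := hmeas.pow_const 2
  have htail : IntegrableOn (fun x => ∫ y in Ioi x, h y ^ 2) (Ioi 0) :=
    integrableOn_integral_Ioi hh2_meas (fun _ => sq_nonneg _) hh2 (by simpa using hyh2)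
  have hpos : ∀ᵐ p : ℝ × I ∂(volume.restrict (Ioi 0)).prod μ, 0 < p.1 :=
    Measure.quasiMeasurePreserving_fst.ae (ae_restrict_mem measurableSet_Ioi)
  have hfk : ∀ᵐ p : ℝ × I ∂(volume.restrict (Ioi 0)).prod μ,
      IntegrableOn (fun y => ‖f y p.2‖ ^ 2) (Ioi 0) :=
    Measure.quasiMeasurePreserving_snd.ae hf.swap.prod_right_ae
  calc ∫ p : ℝ × I, ‖∫ y in Ioi p.1, K p.1 y p.2 * f y p.2‖ ^ 2
        ∂((volume.restrict (Ioi 0)).prod μ)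
      ≤ ∫ p : ℝ × I, (∫ y in Ioi p.1, h y ^ 2) * (∫ y in Ioi 0, ‖f y p.2‖ ^ 2)
        ∂((volume.restrict (Ioi 0)).prod μ) := by
        refine integral_mono_of_nonneg (.of_forall fun _ => sq_nonneg _)
          (htail.mul_prod hf.integral_prod_right) ?_
        filter_upwards [hpos, hfk] with p hp hpf
        exact sq_norm_integral_Ioi_kernel_le hmeas hKbd hh2 hfmeas hp.le hpf
    _ = (∫ x in Ioi 0, ∫ y in Ioi x, h y ^ 2) * ∫ k, (∫ y in Ioi 0, ‖f y k‖ ^ 2) ∂μ :=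
        integral_prod_mul (fun x => ∫ y in Ioi x, h y ^ 2) fun k => ∫ y in Ioi 0, ‖f y k‖ ^ 2
    _ = _ := by
        rw [integral_Ioi_integral_Ioi hh2_meas (fun _ => sq_nonneg _) hh2,
          integral_prod_symm _ hf]
        simp only [sub_zero]

end TriangularKernel

theorem stmt_18_general {I : Type*} [MeasurableSpace I] (μ : Measure I) [SigmaFinite μ]
    (h : ℝ → ℝ) (hmeas : Measurable h)
    (K : ℝ → ℝ → I → ℂ)
    (hKbd : ∀ x y : ℝ, x ≤ y → ∀ k : I, ‖K x y k‖ ≤ h y)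
    (hh2 : IntegrableOn (fun y : ℝ => h y ^ 2) (Ioi 0) volume)
    (hyh2 : IntegrableOn (fun y : ℝ => y * h y ^ 2) (Ioi 0) volume)
    (f : ℝ → I → ℂ)
    (hfmeas : Measurable (fun p : ℝ × I => f p.1 p.2))
    (hf : Integrable (fun p : ℝ × I => ‖f p.1 p.2‖ ^ 2)
      ((volume.restrict (Ioi (0 : ℝ))).prod μ)) :
    -- (i) the `L²(ℝ⁺ × I)` bound
    Real.sqrt (∫ p : ℝ × I,
        ‖∫ y in Ioi p.1, K p.1 y p.2 * f y p.2‖ ^ 2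
        ∂((volume.restrict (Ioi (0 : ℝ))).prod μ))
      ≤ Real.sqrt (∫ y in Ioi (0 : ℝ), y * h y ^ 2)
        * Real.sqrt (∫ p : ℝ × I, ‖f p.1 p.2‖ ^ 2
            ∂((volume.restrict (Ioi (0 : ℝ))).prod μ)) ∧
    -- (ii) the `C⁰(ℝ⁺, L²(I))` bound
    ∀ x : ℝ, 0 ≤ x →
      Real.sqrt (∫ k, ‖∫ y in Ioi x, K x y k * f y k‖ ^ 2 ∂μ)
        ≤ Real.sqrt (∫ y in Ioi (0 : ℝ), h y ^ 2)
          * Real.sqrt (∫ p : ℝ × I, ‖f p.1 p.2‖ ^ 2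
              ∂((volume.restrict (Ioi (0 : ℝ))).prod μ)) := by
  have hf_nonneg : 0 ≤ ∫ p : ℝ × I, ‖f p.1 p.2‖ ^ 2 ∂((volume.restrict (Ioi (0 : ℝ))).prod μ) :=
    integral_nonneg fun _ => sq_nonneg _
  refine ⟨?_, fun x hx => ?_⟩
  · rw [← Real.sqrt_mul' _ hf_nonneg]
    exact Real.sqrt_le_sqrt
      (integral_prod_sq_norm_integral_Ioi_kernel_le hmeas hKbd hh2 hyh2 hfmeas hf)
  · rw [← Real.sqrt_mul' _ hf_nonneg]
    exact Real.sqrt_le_sqrt (integral_sq_norm_integral_Ioi_kernel_le hmeas hKbd hh2 hfmeas hf hx)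

theorem stmt_18 {I : Type*} [MeasurableSpace I] (μ : Measure I) [SigmaFinite μ]
    (h : ℝ → ℝ) (hmeas : Measurable h) (hnonneg : ∀ y : ℝ, 0 ≤ h y)
    (K : ℝ → ℝ → I → ℂ)
    (hKmeas : Measurable (fun p : ℝ × ℝ × I => K p.1 p.2.1 p.2.2))
    (hK0 : ∀ (x y : ℝ) (k : I), y < x → K x y k = 0)
    (hKbd : ∀ x y : ℝ, x ≤ y → ∀ k : I, ‖K x y k‖ ≤ h y)
    (hh2 : IntegrableOn (fun y : ℝ => h y ^ 2) (Ioi 0) volume)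
    (hyh2 : IntegrableOn (fun y : ℝ => y * h y ^ 2) (Ioi 0) volume)
    (f : ℝ → I → ℂ)
    (hfmeas : Measurable (fun p : ℝ × I => f p.1 p.2))
    (hf : Integrable (fun p : ℝ × I => ‖f p.1 p.2‖ ^ 2)
      ((volume.restrict (Ioi (0 : ℝ))).prod μ)) :
    -- (i) the `L²(ℝ⁺ × I)` bound
    Real.sqrt (∫ p : ℝ × I,
        ‖∫ y in Ioi p.1, K p.1 y p.2 * f y p.2‖ ^ 2
        ∂((volume.restrict (Ioi (0 : ℝ))).prod μ))
      ≤ Real.sqrt (∫ y in Ioi (0 : ℝ), y * h y ^ 2)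
        * Real.sqrt (∫ p : ℝ × I, ‖f p.1 p.2‖ ^ 2
            ∂((volume.restrict (Ioi (0 : ℝ))).prod μ)) ∧
    -- (ii) the `C⁰(ℝ⁺, L²(I))` bound
    ∀ x : ℝ, 0 ≤ x →
      Real.sqrt (∫ k, ‖∫ y in Ioi x, K x y k * f y k‖ ^ 2 ∂μ)
        ≤ Real.sqrt (∫ y in Ioi (0 : ℝ), h y ^ 2)
          * Real.sqrt (∫ p : ℝ × I, ‖f p.1 p.2‖ ^ 2
              ∂((volume.restrict (Ioi (0 : ℝ))).prod μ)) :=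
  stmt_18_general μ h hmeas K hKbd hh2 hyh2 f hfmeas hf
end
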